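/- Let ℱ be a nonempty family of finite simple graphs and let k ≥ 1 be an integer. Suppose there exist nonnegative integers a, C, A, c with a + C = A + c = k and c ≤ k/2 ≤ C such that both pairs (a, C) and (A, c) are ℱ-admissible. Then for every ε > 0 there exists N such that for all n ≥ N, Dist(n, Forb(ℱ)) ≤ (1/(2k) + ε) · binom(n,2). -/

import Mathlib

/-- A family of finite simple graphs, each presented on a vertex set `Fin n`. -/
abbrev GraphFam : Type := Set ((n : ℕ) × SimpleGraph (Fin n))

/-- The edit distance between two simple graphs on the same finite vertex set. -/
noncomputable def editDist {V : Type} [Fintype V] (G G' : SimpleGraph V) : ℕ :=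
  (symmDiff G.edgeSet G'.edgeSet).ncard

/-- A graph `G` is `ℱ`-free if no member of `ℱ` embeds into `G`. -/
def FamFree (ℱ : GraphFam) {V : Type} (G : SimpleGraph V) : Prop :=
  ∀ F ∈ ℱ, ¬ Nonempty (F.2 ↪g G)

/-- `Dist(G, Forb(ℱ))`: minimum edit distance from `G` to an `ℱ`-free graph on
the same vertex set. -/
noncomputable def distFam (ℱ : GraphFam) {V : Type} [Fintype V] (G : SimpleGraph V) : ℕ :=
  sInf { d | ∃ G' : SimpleGraph V, FamFree ℱ G' ∧ d = editDist G G' }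

/-- `Dist(n, Forb(ℱ))`: maximum of `Dist(G, Forb(ℱ))` over `n`-vertex graphs. -/
noncomputable def distFamN (ℱ : GraphFam) (n : ℕ) : ℕ :=
  sSup { d | ∃ G : SimpleGraph (Fin n), d = distFam ℱ G }

/-- `F` admits a partition of its vertex set into `a` independent sets and `c`
cliques (parts may be empty). -/
def HasPartition {V : Type} (F : SimpleGraph V) (a c : ℕ) : Prop :=
  ∃ φ : V → Fin a ⊕ Fin c,
    (∀ (i : Fin a) (u v : V), φ u = Sum.inl i → φ v = Sum.inl i → ¬ F.Adj u v) ∧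
    (∀ (j : Fin c) (u v : V), φ u = Sum.inr j → φ v = Sum.inr j → u ≠ v → F.Adj u v)

/-- The pair `(a,c)` is `ℱ`-admissible if no `F ∈ ℱ` admits a partition of its
vertex set into `a` independent sets and `c` cliques. -/
def Admissible (ℱ : GraphFam) (a c : ℕ) : Prop :=
  ∀ F ∈ ℱ, ¬ HasPartition F.2 a c

open Finset

section Aux

variable {n k : ℕ}


/-!
Colour the vertices of `G` with `k = a + C` colours, `a` of them marking independent parts and
`C` of them marking cliques, and repair `G` inside every colour class: delete all edges inside an
independent class, add all missing edges inside a clique class, keep the edges between classes.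
By admissibility the result is `ℱ`-free. A fixed pair of vertices receives a fixed common colour
under a `1/k²` fraction of all colourings, so on average the repair costs
`(a · e(G) + C · e(Gᶜ)) / k²` edits. Using `(a, C)` when `G` has at least as many edges as
non-edges and `(A, c)` otherwise, this average is at most `(e(G) + e(Gᶜ)) / (2k)`, and
`e(G) + e(Gᶜ) = n.choose 2`.
-/

open Finset

section Counting

variable {V α : Type*} [Fintype V] [DecidableEq V] [Fintype α] [DecidableEq α]

theorem card_filter_apply_eq_and_apply_eq {u v : V} (huv : u ≠ v) (x : α) :
    #{φ : V → α | φ u = x ∧ φ v = x} = Fintype.card α ^ (Fintype.card V - 2) := by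
  have hpi : ({φ : V → α | φ u = x ∧ φ v = x} : Finset _) =
      Fintype.piFinset fun w => if w = u ∨ w = v then {x} else univ := by
    ext φ
    simp only [mem_filter, mem_univ, true_and, Fintype.mem_piFinset]
    constructor
    · rintro ⟨hu, hv⟩ w
      split_ifs with hw
      · rcases hw with rfl | rfl <;> simp [*]
      · exact mem_univ _
    · intro h
      exact ⟨by simpa using h u, by simpa using h v⟩
  have hcompl : #{w : V | ¬(w = u ∨ w = v)} = Fintype.card V - 2 := by
    have hpair : ({w : V | w = u ∨ w = v} : Finset V) = {u, v} := by ext; simp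
    rw [filter_not, hpair, card_sdiff_of_subset (subset_univ _), card_univ, card_pair huv]
  simp_rw [hpi, Fintype.card_piFinset, apply_ite card, card_singleton, card_univ]
  rw [prod_ite, prod_const_one, one_mul, prod_const, hcompl]

theorem card_filter_apply_eq_apply_and {u v : V} (huv : u ≠ v) (p : α → Prop)
    [DecidablePred p] :
    #{φ : V → α | φ u = φ v ∧ p (φ u)} =
      #{x | p x} * Fintype.card α ^ (Fintype.card V - 2) := by
  rw [card_eq_sum_card_fiberwise (f := fun φ => φ u) (t := {x | p x}) fun φ hφ => by
    simp only [coe_filter, mem_univ, true_and, Set.mem_ofPred_eq] at hφ ⊢; exact hφ.2]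
  rw [← smul_eq_mul, ← sum_const]
  refine sum_congr rfl fun x hx => ?_
  simp only [mem_filter, mem_univ, true_and] at hx
  rw [filter_filter, ← card_filter_apply_eq_and_apply_eq huv x]
  congr 1
  refine filter_congr fun φ _ => ⟨?_, ?_⟩
  · rintro ⟨⟨hφ, -⟩, rfl⟩
    exact ⟨rfl, hφ.symm⟩
  · rintro ⟨hu, hv⟩
    exact ⟨⟨hu.trans hv.symm, hu ▸ hx⟩, hu⟩

end Counting

section EditDistance

variable {V : Type} [Fintype V] [DecidableEq V]

theorem SimpleGraph.card_edgeFinset_add_card_edgeFinset_compl (G : SimpleGraph V)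
    [DecidableRel G.Adj] : #G.edgeFinset + #Gᶜ.edgeFinset = (Fintype.card V).choose 2 := by
  rw [← card_union_of_disjoint (SimpleGraph.disjoint_edgeFinset.2 disjoint_compl_right),
    ← SimpleGraph.edgeFinset_sup]
  convert SimpleGraph.card_edgeFinset_top_eq_card_choose_two (V := V)
  exact sup_compl_eq_top

theorem editDist_eq_card_add_card (G H : SimpleGraph V) [DecidableRel G.Adj]
    [DecidableRel H.Adj] :
    editDist G H = #{e ∈ G.edgeFinset | e ∉ H.edgeFinset} +
      #{e ∈ Gᶜ.edgeFinset | e ∈ H.edgeFinset} := by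
  have hsymm : symmDiff G.edgeSet H.edgeSet =
      ↑(G.edgeFinset \ H.edgeFinset ∪ H.edgeFinset \ G.edgeFinset) := by
    simp [symmDiff_def, Set.sup_eq_union]
  have hnew : H.edgeFinset \ G.edgeFinset = {e ∈ Gᶜ.edgeFinset | e ∈ H.edgeFinset} := by
    ext e
    induction e using Sym2.ind with | _ u v =>
    have : H.Adj u v → u ≠ v := H.ne_of_adj
    simp only [mem_sdiff, mem_filter, SimpleGraph.mem_edgeFinset, SimpleGraph.mem_edgeSet,
      SimpleGraph.compl_adj]
    tauto
  rw [editDist, hsymm, Set.ncard_coe_finset, card_union_of_disjoint disjoint_sdiff_sdiff,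
    sdiff_eq_filter, hnew]

theorem sum_editDist_eq {Ω : Type*} [Fintype Ω] (G : SimpleGraph V) [DecidableRel G.Adj]
    (H : Ω → SimpleGraph V) [∀ ω, DecidableRel (H ω).Adj] :
    ∑ ω, editDist G (H ω) = ∑ e ∈ G.edgeFinset, #{ω | e ∉ (H ω).edgeFinset} +
      ∑ e ∈ Gᶜ.edgeFinset, #{ω | e ∈ (H ω).edgeFinset} := by
  simp only [editDist_eq_card_add_card, sum_add_distrib, card_filter]
  rw [sum_comm, sum_comm (s := univ)]

end EditDistance

namespace SimpleGraph

section PartitionRepair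

variable {V α β : Type}

/-- Left colours mark independent parts and right colours mark cliques, as in `HasPartition`. -/
def partitionRepair (G : SimpleGraph V) (φ : V → α ⊕ β) : SimpleGraph V where
  Adj u v := u ≠ v ∧ (φ u = φ v ∧ (φ u).isRight ∨ φ u ≠ φ v ∧ G.Adj u v)
  symm := ⟨fun u v => by
    rintro ⟨huv, ⟨hφ, h⟩ | ⟨hφ, h⟩⟩
    · exact ⟨huv.symm, .inl ⟨hφ.symm, hφ ▸ h⟩⟩
    · exact ⟨huv.symm, .inr ⟨Ne.symm hφ, h.symm⟩⟩⟩
  loopless := ⟨fun _ h => h.1 rfl⟩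

theorem partitionRepair_adj {G : SimpleGraph V} {φ : V → α ⊕ β} {u v : V} :
    (G.partitionRepair φ).Adj u v ↔
      u ≠ v ∧ (φ u = φ v ∧ (φ u).isRight ∨ φ u ≠ φ v ∧ G.Adj u v) :=
  Iff.rfl

theorem famFree_partitionRepair {ℱ : GraphFam} {a c : ℕ} (hadm : Admissible ℱ a c)
    (G : SimpleGraph V) (φ : V → Fin a ⊕ Fin c) : FamFree ℱ (G.partitionRepair φ) := by
  rintro F hF ⟨e⟩
  refine hadm F hF ⟨φ ∘ e, fun i u v hu hv hadj => ?_, fun j u v hu hv huv => ?_⟩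
  · obtain ⟨-, ⟨-, hright⟩ | ⟨hne, -⟩⟩ := e.map_adj_iff.2 hadj
    · simp [Function.comp_apply ▸ hu] at hright
    · exact hne (hu.trans hv.symm)
  · exact e.map_adj_iff.1 ⟨e.injective.ne huv, .inl ⟨hu.trans hv.symm, by simp_all⟩⟩

variable [Fintype V] [DecidableEq V] [Fintype α] [Fintype β] [DecidableEq α] [DecidableEq β]
  (G : SimpleGraph V) [DecidableRel G.Adj]

instance (φ : V → α ⊕ β) : DecidableRel (G.partitionRepair φ).Adj := fun u v =>
  inferInstanceAs
    (Decidable (u ≠ v ∧ (φ u = φ v ∧ (φ u).isRight ∨ φ u ≠ φ v ∧ G.Adj u v)))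

theorem card_filter_notMem_edgeFinset_partitionRepair {e : Sym2 V} (he : e ∈ G.edgeFinset) :
    #{φ : V → α ⊕ β | e ∉ (G.partitionRepair φ).edgeFinset} =
      Fintype.card α * (Fintype.card α + Fintype.card β) ^ (Fintype.card V - 2) := by
  induction e using Sym2.ind with | _ u v =>
  rw [mem_edgeFinset, mem_edgeSet] at he
  have huv := G.ne_of_adj he
  have hleft : #{x : α ⊕ β | x.isLeft} = Fintype.card α := by
    rw [← Fintype.card_subtype]; exact Fintype.card_congr Equiv.sumIsLeft
  rw [← Fintype.card_sum, ← hleft, ← card_filter_apply_eq_apply_and huv]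
  congr 1
  refine filter_congr fun φ _ => ?_
  simp only [mem_edgeFinset, mem_edgeSet, partitionRepair_adj, ne_eq, huv, not_false_eq_true,
    he, and_true, true_and, not_or, not_and, Sum.not_isRight, Decidable.not_not]
  tauto

theorem card_filter_mem_edgeFinset_partitionRepair {e : Sym2 V} (he : e ∈ Gᶜ.edgeFinset) :
    #{φ : V → α ⊕ β | e ∈ (G.partitionRepair φ).edgeFinset} =
      Fintype.card β * (Fintype.card α + Fintype.card β) ^ (Fintype.card V - 2) := by
  induction e using Sym2.ind with | _ u v =>
  rw [mem_edgeFinset, mem_edgeSet, compl_adj] at he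
  have hright : #{x : α ⊕ β | x.isRight} = Fintype.card β := by
    rw [← Fintype.card_subtype]; exact Fintype.card_congr Equiv.sumIsRight
  rw [← Fintype.card_sum, ← hright, ← card_filter_apply_eq_apply_and he.1]
  congr 1
  refine filter_congr fun φ _ => ?_
  simp [partitionRepair_adj, he]

theorem sum_editDist_partitionRepair :
    ∑ φ : V → α ⊕ β, editDist G (G.partitionRepair φ) =
      (Fintype.card α * #G.edgeFinset + Fintype.card β * #Gᶜ.edgeFinset) *
        (Fintype.card α + Fintype.card β) ^ (Fintype.card V - 2) := by
  rw [sum_editDist_eq, sum_congr rfl fun e => G.card_filter_notMem_edgeFinset_partitionRepair,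
    sum_congr rfl fun e => G.card_filter_mem_edgeFinset_partitionRepair, sum_const, sum_const,
    smul_eq_mul, smul_eq_mul]
  ring

theorem exists_sq_mul_editDist_partitionRepair_le [Nonempty (α ⊕ β)]
    (hV : 2 ≤ Fintype.card V) :
    ∃ φ : V → α ⊕ β,
      (Fintype.card α + Fintype.card β) ^ 2 * editDist G (G.partitionRepair φ) ≤
      Fintype.card α * #G.edgeFinset + Fintype.card β * #Gᶜ.edgeFinset := by
  set K := Fintype.card α + Fintype.card β
  set X := Fintype.card α * #G.edgeFinset + Fintype.card β * #Gᶜ.edgeFinset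
  have hsum :
      ∑ φ : V → α ⊕ β, K ^ 2 * editDist G (G.partitionRepair φ) = ∑ _φ : V → α ⊕ β, X := by
    rw [← mul_sum, sum_editDist_partitionRepair, sum_const, card_univ, Fintype.card_fun,
      Fintype.card_sum, smul_eq_mul, ← Nat.add_sub_of_le hV, pow_add, Nat.add_sub_cancel_left]
    ring
  obtain ⟨φ, -, hφ⟩ := exists_le_of_sum_le univ_nonempty hsum.le
  exact ⟨φ, hφ⟩

end PartitionRepair

end SimpleGraph

theorem sq_mul_distFam_le {V : Type} [Fintype V] [DecidableEq V] (ℱ : GraphFam) {a c : ℕ}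
    (hadm : Admissible ℱ a c) (hac : 0 < a + c) (hV : 2 ≤ Fintype.card V) (G : SimpleGraph V)
    [DecidableRel G.Adj] :
    (a + c) ^ 2 * distFam ℱ G ≤ a * #G.edgeFinset + c * #Gᶜ.edgeFinset := by
  have : Nonempty (Fin a ⊕ Fin c) := Fintype.card_pos_iff.1 (by simpa using hac)
  obtain ⟨φ, hφ⟩ := G.exists_sq_mul_editDist_partitionRepair_le (α := Fin a) (β := Fin c) hV
  simp only [Fintype.card_fin] at hφ
  exact le_trans (Nat.mul_le_mul_left _ (Nat.sInf_le
    ⟨_, SimpleGraph.famFree_partitionRepair hadm G φ, rfl⟩)) hφ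

theorem two_mul_mul_distFam_le_choose {V : Type} [Fintype V] (ℱ : GraphFam)
    {k a C A c : ℕ} (hk : 1 ≤ k) (haC : a + C = k) (hAc : A + c = k) (haC_le : a ≤ C)
    (hcA_le : c ≤ A) (hadm₁ : Admissible ℱ a C) (hadm₂ : Admissible ℱ A c)
    (hV : 2 ≤ Fintype.card V)
    (G : SimpleGraph V) : 2 * k * distFam ℱ G ≤ (Fintype.card V).choose 2 := by
  classical
  rw [← G.card_edgeFinset_add_card_edgeFinset_compl]
  set m := #G.edgeFinset
  set m' := #Gᶜ.edgeFinset
  suffices ∃ x y, x + y = k ∧ Admissible ℱ x y ∧ 2 * (x * m + y * m') ≤ k * (m + m') by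
    obtain ⟨x, y, hxy, hadm, hle⟩ := this
    have hD := sq_mul_distFam_le ℱ hadm (by omega) hV G
    rw [hxy] at hD
    refine Nat.le_of_mul_le_mul_left ?_ hk
    calc k * (2 * k * distFam ℱ G) = 2 * (k ^ 2 * distFam ℱ G) := by ring
      _ ≤ 2 * (x * m + y * m') := by gcongr
      _ ≤ k * (m + m') := hle
  rcases le_total m' m with h | h
  · refine ⟨a, C, haC, hadm₁, ?_⟩
    have := mul_add_mul_le_mul_add_mul haC_le h
    rw [← haC]
    linarith
  · refine ⟨A, c, hAc, hadm₂, ?_⟩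
    have := mul_add_mul_le_mul_add_mul hcA_le h
    rw [← hAc]
    linarith

theorem exists_distFamN_eq_distFam (ℱ : GraphFam) (n : ℕ) :
    ∃ G : SimpleGraph (Fin n), distFamN ℱ n = distFam ℱ G := by
  have hfin : {d | ∃ G : SimpleGraph (Fin n), d = distFam ℱ G}.Finite := by
    refine (Set.finite_range (distFam ℱ (V := Fin n))).subset ?_
    rintro _ ⟨G, rfl⟩
    exact ⟨G, rfl⟩
  exact Nat.sSup_mem (s := {d | ∃ G : SimpleGraph (Fin n), d = distFam ℱ G}) ⟨_, ⊥, rfl⟩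
    hfin.bddAbove

theorem symmetric_bound_general (ℱ : GraphFam) (k : ℕ) (hk : 1 ≤ k)
    (a C A c : ℕ) (haC : a + C = k) (hAc : A + c = k)
    (hc : (c : ℝ) ≤ (k : ℝ) / 2) (hC : (k : ℝ) / 2 ≤ (C : ℝ))
    (hadm1 : Admissible ℱ a C) (hadm2 : Admissible ℱ A c) :
    ∀ ε : ℝ, 0 < ε → ∃ N : ℕ, ∀ n : ℕ, N ≤ n →
      (distFamN ℱ n : ℝ) ≤ (1 / (2 * (k : ℝ)) + ε) * (n.choose 2 : ℝ) := by
  intro ε hε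
  have haC_le : a ≤ C := by
    have : k ≤ 2 * C := by exact_mod_cast (by linarith : (k : ℝ) ≤ 2 * C)
    omega
  have hcA_le : c ≤ A := by
    have : 2 * c ≤ k := by exact_mod_cast (by linarith : 2 * (c : ℝ) ≤ k)
    omega
  refine ⟨2, fun n hn => ?_⟩
  obtain ⟨G, hG⟩ := exists_distFamN_eq_distFam ℱ n
  have hD := two_mul_mul_distFam_le_choose ℱ hk haC hAc haC_le hcA_le hadm1 hadm2
    (by simpa using hn) G
  rw [Fintype.card_fin] at hD
  have hk' : (0 : ℝ) < 2 * k := by positivity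
  rw [hG, add_mul, one_div_mul_eq_div]
  calc (distFam ℱ G : ℝ) ≤ n.choose 2 / (2 * k) := by
        rw [le_div_iff₀ hk']
        exact_mod_cast (by linarith : distFam ℱ G * (2 * k) ≤ n.choose 2)
    _ ≤ n.choose 2 / (2 * k) + ε * n.choose 2 := by
        have : (0 : ℝ) ≤ ε * n.choose 2 := by positivity
        linarith

theorem symmetric_bound (ℱ : GraphFam) (hne : ℱ.Nonempty) (k : ℕ) (hk : 1 ≤ k)
    (a C A c : ℕ) (haC : a + C = k) (hAc : A + c = k)
    (hc : (c : ℝ) ≤ (k : ℝ) / 2) (hC : (k : ℝ) / 2 ≤ (C : ℝ))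
    (hadm1 : Admissible ℱ a C) (hadm2 : Admissible ℱ A c) :
    ∀ ε : ℝ, 0 < ε → ∃ N : ℕ, ∀ n : ℕ, N ≤ n →
      (distFamN ℱ n : ℝ) ≤ (1 / (2 * (k : ℝ)) + ε) * (n.choose 2 : ℝ) :=
  symmetric_bound_general ℱ k hk a C A c haC hAc hc hC hadm1 hadm2
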